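/- Let a_1 > a_2 > a_3 be integers such that a_1 and a_3 have the same number of factors of 2 in their prime factorizations, let t_1, t_2, t_3 be nonnegative integers, and let S = K^{(a_1)}_{a_1+t_1} ∪ K^{(a_2)}_{a_2+t_2} ∪ K^{(a_3)}_{a_3+t_3} be a vertex disjoint union of cliques. Then any 2-coloring of ℤ with no monochromatic translate of any set in W'(S) is periodic with period 2a_2. -/

import Mathlib

/-!
Flipping the coordinates in a set `X` is an automorphism of the cube. Taking `X` to contain some
of the three cliques and to miss the others moves the weights of `S` to `|X| ± aᵢ` with any
prescribed signs, so a colouring with no monochromatic translate of a member of `W'(S)` has no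
monochromatic set `{z ± a₁, z ± a₂, z ± a₃}`. For such a colouring a pair `{x ± a₂}` of distinct
colours would propagate along the steps `a₁ ± a₃`, each step flipping the colour of `x + a₁`; since
`a₁ / a₃` is a ratio of odd numbers, two of these walks meet after step counts of different parity.
-/

/-- An automorphism of the hypercube `Q_d`: a bijection of the vertex set preserving
adjacency (symmetric difference of size one) in both directions. -/
def IsCubeAutomorphism {d : ℕ} (ψ : Finset (Fin d) → Finset (Fin d)) : Prop :=
  Function.Bijective ψ ∧
    ∀ A B : Finset (Fin d), (symmDiff A B).card = 1 ↔ (symmDiff (ψ A) (ψ B)).card = 1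

/-- `W_d(S) = {|A| : A ∈ S}`, the set of weights (as integers) of members of `S`. -/
def weightSet {d : ℕ} (S : Set (Finset (Fin d))) : Set ℤ :=
  {w | ∃ A ∈ S, (A.card : ℤ) = w}

/-- `W*(S) = {W_d(ψ(S)) : ψ an automorphism of Q_d}`. -/
def WStar {d : ℕ} (S : Set (Finset (Fin d))) : Set (Set ℤ) :=
  {W | ∃ ψ, IsCubeAutomorphism ψ ∧ W = weightSet (ψ '' S)}

/-- `D` is a translate of `W`. -/
def IsTranslateOf (D W : Set ℤ) : Prop := ∃ j : ℤ, D = (fun x => x + j) '' W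

/-- The translates of sets from `𝒲` whose smallest element is `0`. -/
def MinZeroTranslates (𝒲 : Set (Set ℤ)) : Set (Set ℤ) :=
  {D | (∃ W ∈ 𝒲, IsTranslateOf D W) ∧ 0 ∈ D ∧ ∀ x ∈ D, 0 ≤ x}

/-- `W'(S)`: translates of sets from `W*(S)` with smallest element `0` which are
minimal with respect to inclusion. -/
def WPrime {d : ℕ} (S : Set (Finset (Fin d))) : Set (Set ℤ) :=
  {D | D ∈ MinZeroTranslates (WStar S) ∧
    ∀ D' ∈ MinZeroTranslates (WStar S), D' ⊆ D → D' = D}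

/-- A family `𝒟` of sets of integers is `t`-translate-Ramsey: every `t`-coloring of `ℤ`
admits a monochromatic translate `D + j` of some `D ∈ 𝒟`. -/
def TranslateRamseySet (t : ℕ) (𝒟 : Set (Set ℤ)) : Prop :=
  ∀ c : ℤ → Fin t, ∃ D ∈ 𝒟, ∃ j : ℤ, ∀ x ∈ D, ∀ y ∈ D, c (x + j) = c (y + j)

open Finset in
lemma card_symmDiff_of_subset {α : Type*} [DecidableEq α] {B X : Finset α} (h : B ⊆ X) :
    ((symmDiff B X).card : ℤ) = X.card - B.card := by
  rw [symmDiff_of_le h, card_sdiff_of_subset h, Nat.cast_sub (card_le_card h)]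

open Finset in
lemma card_symmDiff_of_disjoint {α : Type*} [DecidableEq α] {B X : Finset α}
    (h : Disjoint B X) : ((symmDiff B X).card : ℤ) = X.card + B.card := by
  rw [h.symmDiff_eq_sup, sup_eq_union, card_union_of_disjoint h, Nat.cast_add, add_comm]

/-- The trace is `∅` for `w = a` and `K` for `w = -a`. -/
lemma exists_trace_card_symmDiff_eq {α : Type*} [DecidableEq α] (K : Finset α) {a : ℕ} {w : ℤ}
    (hw : w = a ∨ w = -a) :
    ∃ Y ⊆ K, ∀ X, X ∩ K = Y → ∀ B ∈ K.powersetCard a,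
      ((symmDiff B X).card : ℤ) = X.card + w := by
  rcases hw with rfl | rfl
  · refine ⟨∅, Finset.empty_subset K, fun X hX B hB => ?_⟩
    obtain ⟨hBK, rfl⟩ := Finset.mem_powersetCard.mp hB
    refine card_symmDiff_of_disjoint (Finset.disjoint_of_subset_left hBK ?_)
    rwa [Finset.disjoint_iff_inter_eq_empty, Finset.inter_comm]
  · refine ⟨K, subset_rfl, fun X hX B hB => ?_⟩
    obtain ⟨hBK, rfl⟩ := Finset.mem_powersetCard.mp hB
    rw [card_symmDiff_of_subset (hBK.trans (Finset.inter_eq_right.mp hX)), sub_eq_add_neg]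

lemma isCubeAutomorphism_symmDiff {d : ℕ} (X : Finset (Fin d)) :
    IsCubeAutomorphism (fun A : Finset (Fin d) => symmDiff A X) := by
  refine ⟨Function.Involutive.bijective fun A => symmDiff_symmDiff_cancel_right X A,
    fun A B => ?_⟩
  rw [symmDiff_symmDiff_symmDiff_comm, symmDiff_self, symmDiff_bot]

lemma weightSet_finite {d : ℕ} (S : Set (Finset (Fin d))) : (weightSet S).Finite :=
  (Set.finite_range fun A : Finset (Fin d) => (A.card : ℤ)).subset
    fun _ ⟨A, _, hA⟩ => ⟨A, hA⟩

lemma mem_wPrime_iff_minimal {d : ℕ} {S : Set (Finset (Fin d))} {D : Set ℤ} :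
    D ∈ WPrime S ↔ Minimal (· ∈ MinZeroTranslates (WStar S)) D :=
  and_congr_right fun _ =>
    forall₂_congr fun _ _ => ⟨fun h hle => (h hle).ge, fun h hle => subset_antisymm hle (h hle)⟩

/-- Translate the weight set to have minimum `0`, then shrink it to an inclusion-minimal member,
which exists because a finite set has only finitely many subsets. -/
lemma exists_wPrime_translate_subset {d : ℕ} {S : Set (Finset (Fin d))}
    {ψ : Finset (Fin d) → Finset (Fin d)} (hψ : IsCubeAutomorphism ψ)
    (hne : (weightSet (ψ '' S)).Nonempty) :
    ∃ D ∈ WPrime S, ∃ j : ℤ, ∀ x ∈ D, x + j ∈ weightSet (ψ '' S) := by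
  set W := weightSet (ψ '' S)
  obtain ⟨μ, hμW, hμ⟩ := Set.exists_min_image W id (weightSet_finite _) hne
  set D₀ := (fun x => x + -μ) '' W
  have hD₀ : D₀ ∈ MinZeroTranslates (WStar S) :=
    ⟨⟨W, ⟨ψ, hψ, rfl⟩, -μ, rfl⟩, ⟨μ, hμW, add_neg_cancel μ⟩,
      by rintro _ ⟨w, hw, rfl⟩; exact le_add_neg_iff_le.mpr (hμ w hw)⟩
  have hfin : {D | D ∈ MinZeroTranslates (WStar S) ∧ D ⊆ D₀}.Finite :=
    ((weightSet_finite _).image _).finite_subsets.subset fun _ hD => hD.2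
  obtain ⟨D, hDD₀, hmin⟩ := hfin.isPWO.exists_le_minimal ⟨hD₀, subset_rfl⟩
  refine ⟨D, mem_wPrime_iff_minimal.mpr ⟨hmin.prop.1, fun D' hD' hle => ?_⟩, μ, fun x hx => ?_⟩
  · exact hmin.le_of_le ⟨hD', hle.trans hDD₀⟩ hle
  · obtain ⟨w, hw, rfl⟩ := hDD₀ hx
    rwa [neg_add_cancel_right]

section Coloring

variable {c : ℤ → Fin 2} {a₁ a₂ a₃ x z a : ℤ} {γ : Fin 2}

def Hits (c : ℤ → Fin 2) (z a : ℤ) (γ : Fin 2) : Prop :=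
  c (z + a) = γ ∨ c (z - a) = γ

lemma hits_neg : Hits c z (-a) γ ↔ Hits c z a γ := by
  rw [Hits, Hits, sub_neg_eq_add, ← sub_eq_add_neg, or_comm]

lemma Hits.exists_signed (h : Hits c z a γ) : ∃ w, (w = a ∨ w = -a) ∧ c (z + w) = γ := by
  rcases h with h | h
  · exact ⟨a, Or.inl rfl, h⟩
  · exact ⟨-a, Or.inr rfl, by rwa [← sub_eq_add_neg]⟩

lemma hits_of_ne (h : c (z + a) ≠ c (z - a)) (γ : Fin 2) : Hits c z a γ := by
  unfold Hits
  omega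

/-- No set `{z ± a₁, z ± a₂, z ± a₃}`, for any choice of signs, is monochromatic. -/
def AvoidsSignedTriples (c : ℤ → Fin 2) (a₁ a₂ a₃ : ℤ) : Prop :=
  ∀ z γ, ¬ (Hits c z a₁ γ ∧ Hits c z a₂ γ ∧ Hits c z a₃ γ)

namespace AvoidsSignedTriples

lemma neg_middle (hA : AvoidsSignedTriples c a₁ a₂ a₃) : AvoidsSignedTriples c a₁ (-a₂) a₃ := by
  simpa only [AvoidsSignedTriples, hits_neg] using hA

lemma neg_right (hA : AvoidsSignedTriples c a₁ a₂ a₃) : AvoidsSignedTriples c a₁ a₂ (-a₃) := by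
  simpa only [AvoidsSignedTriples, hits_neg] using hA

lemma not_hits_of_ne (hA : AvoidsSignedTriples c a₁ a₂ a₃) (hx : c (x + a₂) ≠ c (x - a₂)) :
    ¬ (Hits c x a₁ γ ∧ Hits c x a₃ γ) :=
  fun h => hA x γ ⟨h.1, hits_of_ne hx γ, h.2⟩

/-- Normalising `c (x + a₂) = c (x + a₁)`, the centre `x + a₁ + a₂` shows that
`c (x + a₁ - a₃ + a₂)` differs from it, and the centre `x - a₂ - a₃` then rules out
`c (x + a₁ - a₃ - a₂)` taking the same value. -/
lemma ne_of_ne_add_sub (hA : AvoidsSignedTriples c a₁ a₂ a₃) (hx : c (x + a₂) ≠ c (x - a₂)) :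
    c (x + (a₁ - a₃) + a₂) ≠ c (x + (a₁ - a₃) - a₂) := by
  wlog hα : c (x + a₂) = c (x + a₁) generalizing a₂
  · have h := this hA.neg_middle (by rwa [sub_neg_eq_add, ← sub_eq_add_neg, ne_comm])
      (by rw [← sub_eq_add_neg]; omega)
    rwa [sub_neg_eq_add, ← sub_eq_add_neg, ne_comm] at h
  intro hy
  have h₁ : c (x + (a₁ - a₃) + a₂) ≠ c (x + a₁) := fun h =>
    hA (x + a₁ + a₂) (c (x + a₁))
      ⟨Or.inr (by rw [← hα]; ring_nf), Or.inr (by ring_nf), Or.inr (by rw [← h]; ring_nf)⟩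
  have h₃ : c (x - a₃) ≠ c (x + a₁) := fun h =>
    hA.not_hits_of_ne hx (γ := c (x - a₃)) ⟨Or.inl h.symm, Or.inr rfl⟩
  have h₂ : c (x - a₂) ≠ c (x + a₁) := hα ▸ hx.symm
  refine hA (x - a₂ - a₃) (c (x + (a₁ - a₃) - a₂)) ⟨Or.inl (by ring_nf), Or.inl ?_, Or.inl ?_⟩
  · rw [show x - a₂ - a₃ + a₂ = x - a₃ by ring]
    omega
  · rw [show x - a₂ - a₃ + a₃ = x - a₂ by ring]
    omega

/-- The colour of `x + a₁` flips because `x + a₁ = (x + (a₁ - a₃)) + a₃`. -/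
lemma step (hA : AvoidsSignedTriples c a₁ a₂ a₃) (hx : c (x + a₂) ≠ c (x - a₂)) :
    c (x + (a₁ - a₃) + a₂) ≠ c (x + (a₁ - a₃) - a₂) ∧ c (x + (a₁ - a₃) + a₁) ≠ c (x + a₁) := by
  have hy := hA.ne_of_ne_add_sub hx
  refine ⟨hy, fun h => hA.not_hits_of_ne hy ⟨Or.inl rfl, Or.inl ?_⟩⟩
  rw [h]
  ring_nf

end AvoidsSignedTriples

lemma step_iterate {P : ℤ → Prop} {φ : ℤ → Fin 2} {s : ℤ}
    (hs : ∀ x, P x → P (x + s) ∧ φ (x + s) ≠ φ x) (hx : P x) (n : ℕ) :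
    P (x + n * s) ∧ (φ (x + n * s) = φ x ↔ Even n) := by
  induction n with
  | zero => simpa using hx
  | succ n ih =>
    obtain ⟨hPn, hφn⟩ := hs _ ih.1
    rw [Nat.cast_succ, add_one_mul, ← add_assoc, Nat.even_add_one, ← ih.2]
    exact ⟨hPn, by omega⟩

/-- With `a₁ = (2k+1)e` and `a₃ = (2l+1)e`, the walks `l (a₁ + a₃) + (k + l + 1) (a₁ - a₃)` and
`k (a₁ + a₃)` from a distinct-coloured pair `{x₀ ± a₂}` end at the same point after step counts of
different parity. -/
theorem AvoidsSignedTriples.periodic {p q : ℕ} {e : ℤ} (hA : AvoidsSignedTriples c a₁ a₂ a₃)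
    (hp : Odd p) (hq : Odd q) (h₁ : a₁ = p * e) (h₃ : a₃ = q * e) :
    Function.Periodic c (2 * a₂) := by
  suffices h : ∀ x, c (x + a₂) = c (x - a₂) by
    intro x
    simpa [two_mul, ← add_assoc] using h (x + a₂)
  intro x₀
  by_contra hx₀
  obtain ⟨k, rfl⟩ := hp
  obtain ⟨l, rfl⟩ := hq
  set P : ℤ → Prop := fun x => c (x + a₂) ≠ c (x - a₂)
  have hsub : ∀ x, P x → P (x + (a₁ - a₃)) ∧ c (x + (a₁ - a₃) + a₁) ≠ c (x + a₁) :=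
    fun _ hx => hA.step hx
  have hadd : ∀ x, P x → P (x + (a₁ + a₃)) ∧ c (x + (a₁ + a₃) + a₁) ≠ c (x + a₁) :=
    fun _ hx => by simpa only [sub_neg_eq_add] using hA.neg_right.step hx
  set φ : ℤ → Fin 2 := fun x => c (x + a₁)
  obtain ⟨hy, hφy⟩ := step_iterate (φ := φ) hadd hx₀ l
  have hφz := (step_iterate (φ := φ) hsub hy (k + l + 1)).2
  have hφw := (step_iterate (φ := φ) hadd hx₀ k).2
  rw [show x₀ + l * (a₁ + a₃) + ((k + l + 1 : ℕ) : ℤ) * (a₁ - a₃) = x₀ + k * (a₁ + a₃) by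
    subst h₁ h₃; push_cast; ring] at hφz
  simp only [Nat.even_iff] at hφy hφz hφw
  omega

end Coloring

theorem avoidsSignedTriples_of_cliques {d a₁ a₂ a₃ : ℕ} {K₁ K₂ K₃ : Finset (Fin d)}
    (hK₁ : a₁ ≤ K₁.card) (h₁₂ : Disjoint K₁ K₂) (h₁₃ : Disjoint K₁ K₃) (h₂₃ : Disjoint K₂ K₃)
    {c : ℤ → Fin 2}
    (hc : ¬ ∃ D ∈ WPrime (↑(K₁.powersetCard a₁) ∪ ↑(K₂.powersetCard a₂) ∪
      ↑(K₃.powersetCard a₃) : Set (Finset (Fin d))),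
        ∃ j : ℤ, ∀ x ∈ D, ∀ y ∈ D, c (x + j) = c (y + j)) :
    AvoidsSignedTriples c a₁ a₂ a₃ := by
  rintro z γ ⟨h₁, h₂, h₃⟩
  obtain ⟨w₁, hw₁, hc₁⟩ := h₁.exists_signed
  obtain ⟨w₂, hw₂, hc₂⟩ := h₂.exists_signed
  obtain ⟨w₃, hw₃, hc₃⟩ := h₃.exists_signed
  obtain ⟨Y₁, hY₁, hB₁⟩ := exists_trace_card_symmDiff_eq K₁ hw₁
  obtain ⟨Y₂, hY₂, hB₂⟩ := exists_trace_card_symmDiff_eq K₂ hw₂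
  obtain ⟨Y₃, hY₃, hB₃⟩ := exists_trace_card_symmDiff_eq K₃ hw₃
  set X := Y₁ ∪ Y₂ ∪ Y₃
  have hX₁ : X ∩ K₁ = Y₁ := by grind [Finset.disjoint_left]
  have hX₂ : X ∩ K₂ = Y₂ := by grind [Finset.disjoint_left]
  have hX₃ : X ∩ K₃ = Y₃ := by grind [Finset.disjoint_left]
  set W := weightSet ((fun A => symmDiff A X) '' (↑(K₁.powersetCard a₁) ∪
    ↑(K₂.powersetCard a₂) ∪ ↑(K₃.powersetCard a₃)))
  have hW : W ⊆ {(X.card : ℤ) + w₁, X.card + w₂, X.card + w₃} := by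
    rintro _ ⟨_, ⟨B, (hB | hB) | hB, rfl⟩, rfl⟩
    · exact Or.inl (hB₁ X hX₁ B hB)
    · exact Or.inr (Or.inl (hB₂ X hX₂ B hB))
    · exact Or.inr (Or.inr (hB₃ X hX₃ B hB))
  have hne : W.Nonempty := by
    obtain ⟨B, hB⟩ := Finset.powersetCard_nonempty.mpr hK₁
    exact ⟨_, _, ⟨B, Or.inl (Or.inl hB), rfl⟩, rfl⟩
  obtain ⟨D, hD, j, hDj⟩ := exists_wPrime_translate_subset (isCubeAutomorphism_symmDiff X) hne
  have hγ : ∀ x ∈ D, c (x + (j + z - X.card)) = γ := by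
    intro x hx
    obtain h | h | h : x + j = X.card + w₁ ∨ x + j = X.card + w₂ ∨ x + j = X.card + w₃ :=
      hW (hDj x hx)
    · rwa [show x + (j + z - X.card) = z + w₁ by linarith]
    · rwa [show x + (j + z - X.card) = z + w₂ by linarith]
    · rwa [show x + (j + z - X.card) = z + w₃ by linarith]
  exact hc ⟨D, hD, j + z - X.card, fun x hx y hy => (hγ x hx).trans (hγ y hy).symm⟩

theorem three_cliques_periodic_two_a2_general (d a1 a2 a3 t1 : ℕ)
    (hval : ∃ p q r : ℕ, Odd p ∧ Odd q ∧ a1 = p * 2 ^ r ∧ a3 = q * 2 ^ r)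
    (K1 K2 K3 : Finset (Fin d))
    (hK1 : K1.card = a1 + t1)
    (hd12 : Disjoint K1 K2) (hd13 : Disjoint K1 K3) (hd23 : Disjoint K2 K3)
    (S : Set (Finset (Fin d)))
    (hS : S = ↑(K1.powersetCard a1) ∪ ↑(K2.powersetCard a2) ∪ ↑(K3.powersetCard a3))
    (c : ℤ → Fin 2)
    (hc : ¬ ∃ D ∈ WPrime S, ∃ j : ℤ, ∀ x ∈ D, ∀ y ∈ D, c (x + j) = c (y + j)) :
    ∀ x : ℤ, c (x + 2 * (a2 : ℤ)) = c x := by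
  obtain ⟨p, q, r, hp, hq, rfl, rfl⟩ := hval
  subst hS
  have hA := avoidsSignedTriples_of_cliques (by omega) hd12 hd13 hd23 hc
  exact hA.periodic hp hq (e := 2 ^ r) (by push_cast; rfl) (by push_cast; rfl)

/-- Lemma 16 (3cliques4:lem): let `a1 > a2 > a3` be integers such that `a1` and `a3`
have the same number of factors of `2` in their prime factorizations (i.e.
`a1 = p·2^r`, `a3 = q·2^r` with `p, q` odd), let `t1, t2, t3 ≥ 0`, and let
`S = K^{(a1)} ∪ K^{(a2)} ∪ K^{(a3)}` be a vertex disjoint union of cliques. Then any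
`2`-coloring of `ℤ` with no monochromatic translate of any set in `W'(S)` is periodic
with period `2·a2`. -/
theorem three_cliques_periodic_two_a2 (d a1 a2 a3 t1 t2 t3 : ℕ)
    (hgt1 : a2 < a1) (hgt2 : a3 < a2)
    (hval : ∃ p q r : ℕ, Odd p ∧ Odd q ∧ a1 = p * 2 ^ r ∧ a3 = q * 2 ^ r)
    (K1 K2 K3 : Finset (Fin d))
    (hK1 : K1.card = a1 + t1) (hK2 : K2.card = a2 + t2) (hK3 : K3.card = a3 + t3)
    (hd12 : Disjoint K1 K2) (hd13 : Disjoint K1 K3) (hd23 : Disjoint K2 K3)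
    (S : Set (Finset (Fin d)))
    (hS : S = ↑(K1.powersetCard a1) ∪ ↑(K2.powersetCard a2) ∪ ↑(K3.powersetCard a3))
    (c : ℤ → Fin 2)
    (hc : ¬ ∃ D ∈ WPrime S, ∃ j : ℤ, ∀ x ∈ D, ∀ y ∈ D, c (x + j) = c (y + j)) :
    ∀ x : ℤ, c (x + 2 * (a2 : ℤ)) = c x :=
  three_cliques_periodic_two_a2_general d a1 a2 a3 t1 hval K1 K2 K3 hK1 hd12 hd13 hd23 S hS c hc
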